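/- Let (a_i)_{i≥1}, (b_i)_{i≥0}, (λ_i)_{i≥1}, (c_i)_{i≥1} be sequences of complex numbers such that for every n ≥ 1 the polynomial c_n x² + a_n x + λ_n is nonzero, and assume that for all n, r, s ≥ 0 the family (wt(p))_{p∈Γ_{n,r,s}} is summable in ℂ. If the subspace W of RatFunc ℂ admits a good basis, then there exists a ℂ-linear map ℒ : W → ℂ such that for all n, r, s ≥ 0, ℒ(x^n P_r(x) Q_s(x)) = Σ_{p∈Γ_{n,r,s}} wt(p). -/

import Mathlib

open Polynomial

/-- Steps of an `R_II` path: up, horizontal, down, vertical-down, backward-down. -/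
inductive RStep : Type
  | U | H | D | V | B
  deriving DecidableEq

/-- Displacement of each step. -/
def RStep.disp : RStep → ℤ × ℤ
  | .U => (1, 1)
  | .H => (1, 0)
  | .D => (1, -1)
  | .V => (0, -1)
  | .B => (-1, -1)

/-- End point of a lattice path starting at `start` with the given list of steps. -/
def endPt (start : ℤ × ℤ) : List RStep → ℤ × ℤ
  | [] => start
  | s :: l => endPt (start + s.disp) l

/-- All intermediate heights along the path (starting at height `h`) are nonnegative,
so that the points of the path lie in `ℤ × ℤ≥0`. -/
def heightsNonneg (h : ℤ) : List RStep → Prop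
  | [] => True
  | s :: l => 0 ≤ h + s.disp.2 ∧ heightsNonneg (h + s.disp.2) l

/-- `Gamma n r s` is the set of `R_II` paths from `(0, r)` to `(n, s)`. -/
def Gamma (n r s : ℕ) : Set (List RStep) :=
  {l | heightsNonneg (r : ℤ) l ∧ endPt (0, (r : ℤ)) l = ((n : ℤ), (s : ℤ))}

/-- The list of all points visited by a path. -/
def pathPoints (start : ℤ × ℤ) : List RStep → List (ℤ × ℤ)
  | [] => [start]
  | s :: l => start :: pathPoints (start + s.disp) l

/-- `RGamma n r s` is the set of restricted `R_II` paths from `(0, r)` to `(n, s)`: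
paths in `Gamma n r s` whose points have first coordinate `n` only at the final point. -/
def RGamma (n r s : ℕ) : Set (List RStep) :=
  {l | l ∈ Gamma n r s ∧ ∀ p ∈ (pathPoints (0, (r : ℤ)) l).dropLast, p.1 ≠ (n : ℤ)}

/-- Weight of a single step starting at height `h`:
`1` for `U`, `b_i` for `H`, `λ_i` for `D`, `a_i` for `V`, `c_i` for `B` starting at height `i`. -/
def stepWt {R : Type*} [CommRing R] (a b lam c : ℕ → R) (h : ℤ) : RStep → R
  | .U => 1
  | .H => b h.toNat
  | .D => lam h.toNat
  | .V => a h.toNat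
  | .B => c h.toNat

/-- Weight of a path starting at height `h`: the product of the weights of its steps. -/
def pathWt {R : Type*} [CommRing R] (a b lam c : ℕ → R) : ℤ → List RStep → R
  | _, [] => 1
  | h, s :: l => stepWt a b lam c h s * pathWt a b lam c (h + s.disp.2) l
/-- The polynomials `P_n` defined by `P_0 = 1`, `P_1 = x - b_0` and
`P_{n+1} = (x - b_n) P_n - (c_n x² + a_n x + λ_n) P_{n-1}` (so `P_{-1} = 0`). -/
noncomputable def Ppoly {R : Type*} [CommRing R] (a b lam c : ℕ → R) : ℕ → Polynomial R
  | 0 => 1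
  | 1 => X - C (b 0)
  | n + 2 =>
      (X - C (b (n + 1))) * Ppoly a b lam c (n + 1) -
        (C (c (n + 1)) * X ^ 2 + C (a (n + 1)) * X + C (lam (n + 1))) * Ppoly a b lam c n

/-- `d_m(x) = ∏_{i=1}^m (c_i x² + a_i x + λ_i)`, with `d_0 = 1`. -/
noncomputable def dpoly {R : Type*} [CommRing R] (a lam c : ℕ → R) (m : ℕ) : Polynomial R :=
  ∏ i ∈ Finset.range m, (C (c (i + 1)) * X ^ 2 + C (a (i + 1)) * X + C (lam (i + 1)))
/-- `Q_m = P_m / d_m` as an element of the field `RatFunc ℂ`. -/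
noncomputable def Qfun (a b lam c : ℕ → ℂ) (m : ℕ) : RatFunc ℂ :=
  algebraMap (Polynomial ℂ) (RatFunc ℂ) (Ppoly a b lam c m) /
    algebraMap (Polynomial ℂ) (RatFunc ℂ) (dpoly a lam c m)

/-- `W`, the ℂ-subspace of `RatFunc ℂ` spanned by `{x^n Q_m : n, m ≥ 0}`. -/
noncomputable def Wspace (a b lam c : ℕ → ℂ) : Submodule ℂ (RatFunc ℂ) :=
  Submodule.span ℂ {f | ∃ n m : ℕ, f = RatFunc.X ^ n * Qfun a b lam c m}

/-- `W'`, the ℂ-subspace of `RatFunc ℂ` spanned by `{x^n / d_m : n, m ≥ 0}`. -/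
noncomputable def W'space (a lam c : ℕ → ℂ) : Submodule ℂ (RatFunc ℂ) :=
  Submodule.span ℂ
    {f | ∃ n m : ℕ, f = RatFunc.X ^ n / algebraMap (Polynomial ℂ) (RatFunc ℂ) (dpoly a lam c m)}

/-- The type `R_II` conditions: for every `n ≥ 1`, `c_n ≠ 0` and `P_n(z) ≠ 0` for every
root `z` of `c_n x² + a_n x + λ_n`. -/
def RIIConds (a b lam c : ℕ → ℂ) : Prop :=
  ∀ n : ℕ, 1 ≤ n → c n ≠ 0 ∧
    ∀ z : ℂ, c n * z ^ 2 + a n * z + lam n = 0 →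
      Polynomial.eval z (Ppoly a b lam c n) ≠ 0

/-- The terms of the relation `(★_{k,ℓ})`:
`c_{k+1} x^{ℓ+2} Q_{k+1} + a_{k+1} x^{ℓ+1} Q_{k+1} + λ_{k+1} x^ℓ Q_{k+1}
  = x^{ℓ+1} Q_k − b_k x^ℓ Q_k − x^ℓ Q_{k−1}` (with `Q_{−1} = 0`),
listed as pairs (coefficient, (exponent of x, index of Q)) after moving all terms to
one side. -/
noncomputable def relTerms (a b lam c : ℕ → ℂ) (k l : ℕ) : List (ℂ × (ℕ × ℕ)) :=
  [(c (k + 1), (l + 2, k + 1)), (a (k + 1), (l + 1, k + 1)), (lam (k + 1), (l, k + 1)),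
    (1, (l + 1, k)), (-b k, (l, k))] ++ if k = 0 then [] else [(-1, (l, k - 1))]

/-- `x^n Q_m` (encoded by the index pair `p = (n, m)`) is obtained from
`{x^{n'} Q_{m'} : (n', m') ∈ S}` by a single application of the relations `(★_{k,ℓ})`:
for some `k, ℓ ≥ 0`, the term `x^n Q_m` occurs in `(★_{k,ℓ})` with nonzero coefficient
and every other term occurring in `(★_{k,ℓ})` with nonzero coefficient belongs to `S`. -/
def SingleApp (a b lam c : ℕ → ℂ) (S : Set (ℕ × ℕ)) (p : ℕ × ℕ) : Prop :=
  ∃ k l : ℕ, (∃ t ∈ relTerms a b lam c k l, t.1 ≠ 0 ∧ t.2 = p) ∧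
    ∀ t ∈ relTerms a b lam c k l, t.2 ≠ p → t.1 = 0 ∨ t.2 ∈ S

/-- `x^n Q_m` (encoded by `p = (n, m)`) is obtained from `{x^{n'} Q_{m'} : (n',m') ∈ S}`
by multiple applications of the relations: there is a finite sequence of index pairs
ending at `p` such that each one is obtained by a single application from `S` together
with the previous ones. -/
def MultiApp (a b lam c : ℕ → ℂ) (S : Set (ℕ × ℕ)) (p : ℕ × ℕ) : Prop :=
  ∃ L : List (ℕ × ℕ), L.getLast? = some p ∧
    ∀ (i : ℕ) (h : i < L.length),
      SingleApp a b lam c (S ∪ {q | q ∈ L.take i}) (L.get ⟨i, h⟩)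

/-- `S ⊆ ℤ≥0 × ℤ≥0` indexes a good basis of `W`: the family `(x^n Q_m)_{(n,m)∈S}` is a
ℂ-basis of `W` (linearly independent and spanning), and every `x^n Q_m` with `n, m ≥ 0`
is obtained from it by multiple applications of the relations `(★_{k,ℓ})`. -/
noncomputable def IsGoodBasis (a b lam c : ℕ → ℂ) (S : Set (ℕ × ℕ)) : Prop :=
  LinearIndependent ℂ
      (fun p : S => RatFunc.X ^ (p : ℕ × ℕ).1 * Qfun a b lam c (p : ℕ × ℕ).2) ∧
    Submodule.span ℂ
        {f | ∃ p ∈ S, f = RatFunc.X ^ (p : ℕ × ℕ).1 * Qfun a b lam c (p : ℕ × ℕ).2} =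
      Wspace a b lam c ∧
    ∀ n m : ℕ, MultiApp a b lam c S (n, m)


section Paths

/-- total displacement of a list of steps -/
def sumd (l : List RStep) : ℤ × ℤ := (l.map RStep.disp).sum

lemma sumd_nil : sumd [] = 0 := rfl

lemma sumd_cons (st : RStep) (l : List RStep) : sumd (st :: l) = st.disp + sumd l := by
  simp [sumd]

lemma sumd_append (l₁ l₂ : List RStep) : sumd (l₁ ++ l₂) = sumd l₁ + sumd l₂ := by
  simp [sumd]

lemma endPt_eq (l : List RStep) : ∀ start, endPt start l = start + sumd l := by
  induction l with
  | nil => intro s; simp [endPt, sumd_nil]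
  | cons st l ih => intro s; rw [endPt, ih, sumd_cons, add_assoc]

lemma hnn_append (l₁ : List RStep) : ∀ (h : ℤ) (l₂ : List RStep),
    heightsNonneg h (l₁ ++ l₂) ↔
      heightsNonneg h l₁ ∧ heightsNonneg (h + (sumd l₁).2) l₂ := by
  induction l₁ with
  | nil => intro h l₂; simp [heightsNonneg, sumd_nil]
  | cons st l ih =>
      intro h l₂
      rw [List.cons_append,
        show heightsNonneg h (st :: (l ++ l₂)) =
          (0 ≤ h + st.disp.2 ∧ heightsNonneg (h + st.disp.2) (l ++ l₂)) from rfl,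
        show heightsNonneg h (st :: l) =
          (0 ≤ h + st.disp.2 ∧ heightsNonneg (h + st.disp.2) l) from rfl,
        ih, sumd_cons, Prod.snd_add, ← add_assoc, and_assoc]

lemma hnn_last (l : List RStep) : ∀ h : ℤ, 0 ≤ h → heightsNonneg h l → 0 ≤ h + (sumd l).2 := by
  induction l with
  | nil => intro h h0 _; simpa [sumd_nil] using h0
  | cons st l ih =>
      intro h h0 hl
      have := ih _ hl.1 hl.2
      rw [sumd_cons, Prod.snd_add, ← add_assoc]
      exact this

lemma pathWt_cons {R : Type*} [CommRing R] (a b lam c : ℕ → R) (h : ℤ) (st : RStep)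
    (l : List RStep) :
    pathWt a b lam c h (st :: l) =
      stepWt a b lam c h st * pathWt a b lam c (h + st.disp.2) l := rfl

lemma pathWt_append {R : Type*} [CommRing R] (a b lam c : ℕ → R) (l₁ : List RStep) :
    ∀ (h : ℤ) (l₂ : List RStep),
      pathWt a b lam c h (l₁ ++ l₂) =
        pathWt a b lam c h l₁ * pathWt a b lam c (h + (sumd l₁).2) l₂ := by
  induction l₁ with
  | nil => intro h l₂; simp [pathWt, sumd_nil]
  | cons st l ih =>
      intro h l₂
      rw [List.cons_append, pathWt_cons, pathWt_cons, ih, sumd_cons, Prod.snd_add,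
        ← add_assoc, mul_assoc]

lemma mem_gamma_iff {n r s : ℕ} {l : List RStep} :
    l ∈ Gamma n r s ↔
      heightsNonneg (r : ℤ) l ∧ (sumd l).1 = (n : ℤ) ∧ (r : ℤ) + (sumd l).2 = (s : ℤ) := by
  simp only [Gamma, Set.mem_setOf_eq, endPt_eq, Prod.ext_iff, Prod.fst_add, Prod.snd_add,
    zero_add]

lemma nil_not_mem_gamma {n r s : ℕ} : ¬ ([] : List RStep) ∈ Gamma (n + 1) r s := by
  rw [mem_gamma_iff]
  rintro ⟨-, h, -⟩
  simp [sumd_nil] at h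
  omega

end Paths

section Mem

lemma cons_mem_gamma {n r s : ℕ} {st : RStep} {t : List RStep} :
    (st :: t) ∈ Gamma n r s ↔
      0 ≤ (r : ℤ) + st.disp.2 ∧ heightsNonneg ((r : ℤ) + st.disp.2) t ∧
        st.disp.1 + (sumd t).1 = (n : ℤ) ∧
        (r : ℤ) + st.disp.2 + (sumd t).2 = (s : ℤ) := by
  rw [mem_gamma_iff, sumd_cons, Prod.fst_add, Prod.snd_add,
    show heightsNonneg (r : ℤ) (st :: t) =
      (0 ≤ (r : ℤ) + st.disp.2 ∧ heightsNonneg ((r : ℤ) + st.disp.2) t) from rfl]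
  constructor
  · rintro ⟨⟨h1, h2⟩, h3, h4⟩; exact ⟨h1, h2, h3, by omega⟩
  · rintro ⟨h1, h2, h3, h4⟩; exact ⟨⟨h1, h2⟩, h3, by omega⟩

lemma consU_mem {n r s : ℕ} {t : List RStep} :
    (RStep.U :: t) ∈ Gamma (n + 1) r s ↔ t ∈ Gamma n (r + 1) s := by
  rw [cons_mem_gamma, mem_gamma_iff, show RStep.U.disp.1 = 1 from rfl,
    show RStep.U.disp.2 = 1 from rfl, show ((r : ℤ) + 1) = ((r + 1 : ℕ) : ℤ) by push_cast; ring]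
  push_cast
  constructor
  · rintro ⟨-, h2, h3, h4⟩; exact ⟨h2, by omega, by omega⟩
  · rintro ⟨h2, h3, h4⟩; exact ⟨by omega, h2, by omega, by omega⟩

lemma consH_mem {n r s : ℕ} {t : List RStep} :
    (RStep.H :: t) ∈ Gamma (n + 1) r s ↔ t ∈ Gamma n r s := by
  rw [cons_mem_gamma, mem_gamma_iff, show RStep.H.disp.1 = 1 from rfl,
    show RStep.H.disp.2 = 0 from rfl, show ((r : ℤ) + 0) = ((r : ℕ) : ℤ) by ring]
  push_cast [-Nat.cast_ofNat]
  constructor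
  · rintro ⟨-, h2, h3, h4⟩; exact ⟨h2, by omega, by omega⟩
  · rintro ⟨h2, h3, h4⟩; exact ⟨by omega, h2, by omega, by omega⟩

lemma consD_mem {n r s : ℕ} {t : List RStep} :
    (RStep.D :: t) ∈ Gamma (n + 1) (r + 1) s ↔ t ∈ Gamma n r s := by
  rw [cons_mem_gamma, mem_gamma_iff, show RStep.D.disp.1 = 1 from rfl,
    show RStep.D.disp.2 = -1 from rfl,
    show (((r + 1 : ℕ)) : ℤ) + -1 = ((r : ℕ) : ℤ) by push_cast; ring]
  push_cast
  constructor
  · rintro ⟨-, h2, h3, h4⟩; exact ⟨h2, by omega, by omega⟩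
  · rintro ⟨h2, h3, h4⟩; exact ⟨by omega, h2, by omega, by omega⟩

lemma consV_mem {n r s : ℕ} {t : List RStep} :
    (RStep.V :: t) ∈ Gamma n (r + 1) s ↔ t ∈ Gamma n r s := by
  rw [cons_mem_gamma, mem_gamma_iff, show RStep.V.disp.1 = 0 from rfl,
    show RStep.V.disp.2 = -1 from rfl,
    show (((r + 1 : ℕ)) : ℤ) + -1 = ((r : ℕ) : ℤ) by push_cast; ring]
  push_cast
  constructor
  · rintro ⟨-, h2, h3, h4⟩; exact ⟨h2, by omega, by omega⟩
  · rintro ⟨h2, h3, h4⟩; exact ⟨by omega, h2, by omega, by omega⟩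

lemma consB_mem {n r s : ℕ} {t : List RStep} :
    (RStep.B :: t) ∈ Gamma n (r + 1) s ↔ t ∈ Gamma (n + 1) r s := by
  rw [cons_mem_gamma, mem_gamma_iff, show RStep.B.disp.1 = -1 from rfl,
    show RStep.B.disp.2 = -1 from rfl,
    show (((r + 1 : ℕ)) : ℤ) + -1 = ((r : ℕ) : ℤ) by push_cast; ring]
  push_cast
  constructor
  · rintro ⟨-, h2, h3, h4⟩; exact ⟨h2, by omega, by omega⟩
  · rintro ⟨h2, h3, h4⟩; exact ⟨by omega, h2, by omega, by omega⟩

lemma cons_down_not_mem {n s : ℕ} {st : RStep} {t : List RStep} (hst : st.disp.2 = -1) :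
    ¬ (st :: t) ∈ Gamma n 0 s := by
  rw [cons_mem_gamma]
  rintro ⟨h1, -⟩
  rw [hst] at h1
  omega

end Mem

section MemApp

lemma append_mem_gamma {n r s : ℕ} {st : RStep} {t : List RStep} :
    (t ++ [st]) ∈ Gamma n r s ↔
      heightsNonneg (r : ℤ) t ∧ 0 ≤ (r : ℤ) + (sumd t).2 + st.disp.2 ∧
        (sumd t).1 + st.disp.1 = (n : ℤ) ∧
        (r : ℤ) + (sumd t).2 + st.disp.2 = (s : ℤ) := by
  rw [mem_gamma_iff, hnn_append, sumd_append,
    show heightsNonneg ((r : ℤ) + (sumd t).2) [st] =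
      (0 ≤ (r : ℤ) + (sumd t).2 + st.disp.2 ∧ True) from rfl,
    show sumd [st] = st.disp by simp [sumd]]
  rw [Prod.fst_add, Prod.snd_add]
  constructor
  · rintro ⟨⟨h1, h2, -⟩, h3, h4⟩; exact ⟨h1, h2, h3, by omega⟩
  · rintro ⟨h1, h2, h3, h4⟩; exact ⟨⟨h1, h2, trivial⟩, h3, by omega⟩

lemma appU_mem {n r s : ℕ} {t : List RStep} :
    (t ++ [RStep.U]) ∈ Gamma (n + 1) r (s + 1) ↔ t ∈ Gamma n r s := by
  rw [append_mem_gamma, mem_gamma_iff, show RStep.U.disp.1 = 1 from rfl,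
    show RStep.U.disp.2 = 1 from rfl]
  push_cast
  constructor
  · rintro ⟨h1, -, h3, h4⟩; exact ⟨h1, by omega, by omega⟩
  · rintro ⟨h1, h3, h4⟩; exact ⟨h1, by omega, by omega, by omega⟩

lemma appU_not_mem {n r : ℕ} {t : List RStep} :
    ¬ (t ++ [RStep.U]) ∈ Gamma (n + 1) r 0 := by
  rw [append_mem_gamma, show RStep.U.disp.2 = 1 from rfl]
  rintro ⟨h1, -, -, h4⟩
  have := hnn_last t (r : ℤ) (by positivity) h1
  omega

lemma appH_mem {n r s : ℕ} {t : List RStep} :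
    (t ++ [RStep.H]) ∈ Gamma (n + 1) r s ↔ t ∈ Gamma n r s := by
  rw [append_mem_gamma, mem_gamma_iff, show RStep.H.disp.1 = 1 from rfl,
    show RStep.H.disp.2 = 0 from rfl]
  push_cast
  constructor
  · rintro ⟨h1, -, h3, h4⟩; exact ⟨h1, by omega, by omega⟩
  · rintro ⟨h1, h3, h4⟩; exact ⟨h1, by omega, by omega, by omega⟩

lemma appD_mem {n r s : ℕ} {t : List RStep} :
    (t ++ [RStep.D]) ∈ Gamma (n + 1) r s ↔ t ∈ Gamma n r (s + 1) := by
  rw [append_mem_gamma, mem_gamma_iff, show RStep.D.disp.1 = 1 from rfl,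
    show RStep.D.disp.2 = -1 from rfl]
  push_cast
  constructor
  · rintro ⟨h1, -, h3, h4⟩; exact ⟨h1, by omega, by omega⟩
  · rintro ⟨h1, h3, h4⟩; exact ⟨h1, by omega, by omega, by omega⟩

lemma appV_mem {n r s : ℕ} {t : List RStep} :
    (t ++ [RStep.V]) ∈ Gamma n r s ↔ t ∈ Gamma n r (s + 1) := by
  rw [append_mem_gamma, mem_gamma_iff, show RStep.V.disp.1 = 0 from rfl,
    show RStep.V.disp.2 = -1 from rfl]
  push_cast
  constructor
  · rintro ⟨h1, -, h3, h4⟩; exact ⟨h1, by omega, by omega⟩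
  · rintro ⟨h1, h3, h4⟩; exact ⟨h1, by omega, by omega, by omega⟩

lemma appB_mem {n r s : ℕ} {t : List RStep} :
    (t ++ [RStep.B]) ∈ Gamma n r s ↔ t ∈ Gamma (n + 1) r (s + 1) := by
  rw [append_mem_gamma, mem_gamma_iff, show RStep.B.disp.1 = -1 from rfl,
    show RStep.B.disp.2 = -1 from rfl]
  push_cast
  constructor
  · rintro ⟨h1, -, h3, h4⟩; exact ⟨h1, by omega, by omega⟩
  · rintro ⟨h1, h3, h4⟩; exact ⟨h1, by omega, by omega, by omega⟩

end MemApp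

section SetEq

lemma gamma_first_succ (n r s : ℕ) :
    (Gamma (n + 1) (r + 1) s : Set (List RStep)) =
      (RStep.U :: ·) '' Gamma n (r + 2) s ∪
        ((RStep.H :: ·) '' Gamma n (r + 1) s ∪
          ((RStep.D :: ·) '' Gamma n r s ∪
            ((RStep.V :: ·) '' Gamma (n + 1) r s ∪ (RStep.B :: ·) '' Gamma (n + 2) r s))) := by
  ext l
  simp only [Set.mem_union, Set.mem_image]
  constructor
  · intro hl
    match l with
    | [] => exact absurd hl nil_not_mem_gamma
    | .U :: t => exact Or.inl ⟨t, consU_mem.mp hl, rfl⟩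
    | .H :: t => exact Or.inr (Or.inl ⟨t, consH_mem.mp hl, rfl⟩)
    | .D :: t => exact Or.inr (Or.inr (Or.inl ⟨t, consD_mem.mp hl, rfl⟩))
    | .V :: t => exact Or.inr (Or.inr (Or.inr (Or.inl ⟨t, consV_mem.mp hl, rfl⟩)))
    | .B :: t => exact Or.inr (Or.inr (Or.inr (Or.inr ⟨t, consB_mem.mp hl, rfl⟩)))
  · rintro (⟨t, ht, rfl⟩ | ⟨t, ht, rfl⟩ | ⟨t, ht, rfl⟩ | ⟨t, ht, rfl⟩ | ⟨t, ht, rfl⟩)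
    · exact consU_mem.mpr ht
    · exact consH_mem.mpr ht
    · exact consD_mem.mpr ht
    · exact consV_mem.mpr ht
    · exact consB_mem.mpr ht

lemma gamma_first_zero (n s : ℕ) :
    (Gamma (n + 1) 0 s : Set (List RStep)) =
      (RStep.U :: ·) '' Gamma n 1 s ∪ (RStep.H :: ·) '' Gamma n 0 s := by
  ext l
  simp only [Set.mem_union, Set.mem_image]
  constructor
  · intro hl
    match l with
    | [] => exact absurd hl nil_not_mem_gamma
    | .U :: t => exact Or.inl ⟨t, consU_mem.mp hl, rfl⟩
    | .H :: t => exact Or.inr ⟨t, consH_mem.mp hl, rfl⟩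
    | .D :: t => exact absurd hl (cons_down_not_mem rfl)
    | .V :: t => exact absurd hl (cons_down_not_mem rfl)
    | .B :: t => exact absurd hl (cons_down_not_mem rfl)
  · rintro (⟨t, ht, rfl⟩ | ⟨t, ht, rfl⟩)
    · exact consU_mem.mpr ht
    · exact consH_mem.mpr ht

lemma gamma_last_succ (n r s : ℕ) :
    (Gamma (n + 1) r (s + 1) : Set (List RStep)) =
      (· ++ [RStep.U]) '' Gamma n r s ∪
        ((· ++ [RStep.H]) '' Gamma n r (s + 1) ∪
          ((· ++ [RStep.D]) '' Gamma n r (s + 2) ∪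
            ((· ++ [RStep.V]) '' Gamma (n + 1) r (s + 2) ∪
              (· ++ [RStep.B]) '' Gamma (n + 2) r (s + 2)))) := by
  ext l
  simp only [Set.mem_union, Set.mem_image]
  constructor
  · intro hl
    have hne : l ≠ [] := by rintro rfl; exact nil_not_mem_gamma hl
    obtain ⟨t, st, rfl⟩ : ∃ t st, l = t ++ [st] :=
      ⟨l.dropLast, l.getLast hne, (l.dropLast_append_getLast hne).symm⟩
    match st with
    | .U => exact Or.inl ⟨t, appU_mem.mp hl, rfl⟩
    | .H => exact Or.inr (Or.inl ⟨t, appH_mem.mp hl, rfl⟩)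
    | .D => exact Or.inr (Or.inr (Or.inl ⟨t, appD_mem.mp hl, rfl⟩))
    | .V => exact Or.inr (Or.inr (Or.inr (Or.inl ⟨t, appV_mem.mp hl, rfl⟩)))
    | .B => exact Or.inr (Or.inr (Or.inr (Or.inr ⟨t, appB_mem.mp hl, rfl⟩)))
  · rintro (⟨t, ht, rfl⟩ | ⟨t, ht, rfl⟩ | ⟨t, ht, rfl⟩ | ⟨t, ht, rfl⟩ | ⟨t, ht, rfl⟩)
    · exact appU_mem.mpr ht
    · exact appH_mem.mpr ht
    · exact appD_mem.mpr ht
    · exact appV_mem.mpr ht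
    · exact appB_mem.mpr ht

lemma gamma_last_zero (n r : ℕ) :
    (Gamma (n + 1) r 0 : Set (List RStep)) =
      (· ++ [RStep.H]) '' Gamma n r 0 ∪
        ((· ++ [RStep.D]) '' Gamma n r 1 ∪
          ((· ++ [RStep.V]) '' Gamma (n + 1) r 1 ∪ (· ++ [RStep.B]) '' Gamma (n + 2) r 1)) := by
  ext l
  simp only [Set.mem_union, Set.mem_image]
  constructor
  · intro hl
    have hne : l ≠ [] := by rintro rfl; exact nil_not_mem_gamma hl
    obtain ⟨t, st, rfl⟩ : ∃ t st, l = t ++ [st] :=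
      ⟨l.dropLast, l.getLast hne, (l.dropLast_append_getLast hne).symm⟩
    match st with
    | .U => exact absurd hl appU_not_mem
    | .H => exact Or.inl ⟨t, appH_mem.mp hl, rfl⟩
    | .D => exact Or.inr (Or.inl ⟨t, appD_mem.mp hl, rfl⟩)
    | .V => exact Or.inr (Or.inr (Or.inl ⟨t, appV_mem.mp hl, rfl⟩))
    | .B => exact Or.inr (Or.inr (Or.inr ⟨t, appB_mem.mp hl, rfl⟩))
  · rintro (⟨t, ht, rfl⟩ | ⟨t, ht, rfl⟩ | ⟨t, ht, rfl⟩ | ⟨t, ht, rfl⟩)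
    · exact appH_mem.mpr ht
    · exact appD_mem.mpr ht
    · exact appV_mem.mpr ht
    · exact appB_mem.mpr ht

end SetEq

section TsumDec

/-- `T n r s = Σ_{p ∈ Γ_{n,r,s}} wt(p)` -/
noncomputable def Tsum (a b lam c : ℕ → ℂ) (n r s : ℕ) : ℂ :=
  ∑' p : Gamma n r s, pathWt a b lam c (r : ℤ) p.1

lemma disj_cons {st st' : RStep} (h : st ≠ st') (A B : Set (List RStep)) :
    Disjoint ((st :: ·) '' A) ((st' :: ·) '' B) := by
  rw [Set.disjoint_left]
  rintro x ⟨t, -, rfl⟩ ⟨t', -, ht⟩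
  injection ht with h1 h2
  exact h h1.symm

lemma append_inj : ∀ st : RStep, Function.Injective (· ++ [st]) := by
  intro st x y h
  have := congrArg List.dropLast h
  simpa [List.dropLast_concat] using this

lemma disj_app {st st' : RStep} (h : st ≠ st') (A B : Set (List RStep)) :
    Disjoint ((· ++ [st]) '' A) ((· ++ [st']) '' B) := by
  rw [Set.disjoint_left]
  rintro x ⟨t, -, rfl⟩ ⟨t', -, ht⟩
  have := congrArg List.getLast? ht
  simp [List.getLast?_concat] at this
  exact h this.symm

variable {a b lam c : ℕ → ℂ}

lemma hasSum_cons_piece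
    (hsum : ∀ n r s : ℕ, Summable fun p : Gamma n r s => pathWt a b lam c (r : ℤ) p.1)
    (st : RStep) {r r' : ℕ} (h' : (r : ℤ) + st.disp.2 = (r' : ℤ)) (n' s : ℕ) :
    HasSum (fun x : ((st :: ·) '' (Gamma n' r' s) : Set (List RStep)) =>
        pathWt a b lam c (r : ℤ) x.1)
      (stepWt a b lam c (r : ℤ) st * Tsum a b lam c n' r' s) := by
  let e : (Gamma n' r' s : Set (List RStep)) ≃
      ((st :: ·) '' Gamma n' r' s : Set (List RStep)) :=
    Equiv.Set.imageOfInjOn _ _ (List.cons_injective.injOn)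
  refine (Equiv.hasSum_iff e).mp ?_
  have hfe : ((fun x : ((st :: ·) '' Gamma n' r' s : Set (List RStep)) =>
      pathWt a b lam c (r : ℤ) x.1) ∘ e) =
      fun t : (Gamma n' r' s : Set (List RStep)) =>
        stepWt a b lam c (r : ℤ) st * pathWt a b lam c ((r' : ℕ) : ℤ) t.1 := by
    funext t
    show pathWt a b lam c (r : ℤ) (st :: t.1) = _
    rw [pathWt_cons, h']
  rw [hfe]
  exact ((hsum n' r' s).hasSum.mul_left _)

lemma hasSum_app_piece
    (hsum : ∀ n r s : ℕ, Summable fun p : Gamma n r s => pathWt a b lam c (r : ℤ) p.1)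
    (st : RStep) (n' r s' : ℕ) :
    HasSum (fun x : ((· ++ [st]) '' (Gamma n' r s') : Set (List RStep)) =>
        pathWt a b lam c (r : ℤ) x.1)
      (Tsum a b lam c n' r s' * stepWt a b lam c (s' : ℤ) st) := by
  let e : (Gamma n' r s' : Set (List RStep)) ≃
      ((· ++ [st]) '' Gamma n' r s' : Set (List RStep)) :=
    Equiv.Set.imageOfInjOn _ _ ((append_inj st).injOn)
  refine (Equiv.hasSum_iff e).mp ?_
  have hfe : ((fun x : ((· ++ [st]) '' Gamma n' r s' : Set (List RStep)) =>
      pathWt a b lam c (r : ℤ) x.1) ∘ e) =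
      fun t : (Gamma n' r s' : Set (List RStep)) =>
        pathWt a b lam c (r : ℤ) t.1 * stepWt a b lam c (s' : ℤ) st := by
    funext t
    show pathWt a b lam c (r : ℤ) (t.1 ++ [st]) = _
    rw [pathWt_append]
    have h2 : (r : ℤ) + (sumd t.1).2 = (s' : ℤ) := (mem_gamma_iff.mp t.2).2.2
    rw [h2, pathWt_cons, pathWt, mul_one]
  rw [hfe]
  exact ((hsum n' r s').hasSum.mul_right _)

end TsumDec

section TRec

variable {a b lam c : ℕ → ℂ}

lemma stepWt_U (h : ℤ) : stepWt a b lam c h RStep.U = 1 := rfl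

lemma stepWt_H (k : ℕ) : stepWt a b lam c ((k : ℕ) : ℤ) RStep.H = b k := by
  show b ((k : ℤ)).toNat = b k
  rw [Int.toNat_natCast]

lemma stepWt_D (k : ℕ) : stepWt a b lam c ((k : ℕ) : ℤ) RStep.D = lam k := by
  show lam ((k : ℤ)).toNat = lam k
  rw [Int.toNat_natCast]

lemma stepWt_V (k : ℕ) : stepWt a b lam c ((k : ℕ) : ℤ) RStep.V = a k := by
  show a ((k : ℤ)).toNat = a k
  rw [Int.toNat_natCast]

lemma stepWt_B (k : ℕ) : stepWt a b lam c ((k : ℕ) : ℤ) RStep.B = c k := by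
  show c ((k : ℤ)).toNat = c k
  rw [Int.toNat_natCast]

variable (hsum : ∀ n r s : ℕ, Summable fun p : Gamma n r s => pathWt a b lam c (r : ℤ) p.1)
include hsum

lemma T_first_succ (n r s : ℕ) :
    Tsum a b lam c (n + 1) (r + 1) s =
      Tsum a b lam c n (r + 2) s + b (r + 1) * Tsum a b lam c n (r + 1) s +
        lam (r + 1) * Tsum a b lam c n r s + a (r + 1) * Tsum a b lam c (n + 1) r s +
        c (r + 1) * Tsum a b lam c (n + 2) r s := by
  have hU := hasSum_cons_piece hsum RStep.U (r := r + 1) (r' := r + 2)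
    (by show ((r + 1 : ℕ) : ℤ) + 1 = ((r + 2 : ℕ) : ℤ); push_cast; ring) n s
  have hH := hasSum_cons_piece hsum RStep.H (r := r + 1) (r' := r + 1)
    (by show ((r + 1 : ℕ) : ℤ) + 0 = ((r + 1 : ℕ) : ℤ); push_cast; ring) n s
  have hD := hasSum_cons_piece hsum RStep.D (r := r + 1) (r' := r)
    (by show ((r + 1 : ℕ) : ℤ) + (-1) = ((r : ℕ) : ℤ); push_cast; ring) n s
  have hV := hasSum_cons_piece hsum RStep.V (r := r + 1) (r' := r)
    (by show ((r + 1 : ℕ) : ℤ) + (-1) = ((r : ℕ) : ℤ); push_cast; ring) (n + 1) s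
  have hB := hasSum_cons_piece hsum RStep.B (r := r + 1) (r' := r)
    (by show ((r + 1 : ℕ) : ℤ) + (-1) = ((r : ℕ) : ℤ); push_cast; ring) (n + 2) s
  have d4 : Disjoint ((RStep.V :: ·) '' Gamma (n + 1) r s)
      ((RStep.B :: ·) '' Gamma (n + 2) r s) := disj_cons (by decide) _ _
  have d3 := Set.disjoint_union_right.mpr
    ⟨disj_cons (show RStep.D ≠ RStep.V by decide) (Gamma n r s) (Gamma (n + 1) r s),
     disj_cons (show RStep.D ≠ RStep.B by decide) (Gamma n r s) (Gamma (n + 2) r s)⟩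
  have d2 := Set.disjoint_union_right.mpr
    ⟨disj_cons (show RStep.H ≠ RStep.D by decide) (Gamma n (r + 1) s) (Gamma n r s),
     Set.disjoint_union_right.mpr
      ⟨disj_cons (show RStep.H ≠ RStep.V by decide) (Gamma n (r + 1) s) (Gamma (n + 1) r s),
       disj_cons (show RStep.H ≠ RStep.B by decide) (Gamma n (r + 1) s) (Gamma (n + 2) r s)⟩⟩
  have d1 := Set.disjoint_union_right.mpr
    ⟨disj_cons (show RStep.U ≠ RStep.H by decide) (Gamma n (r + 2) s) (Gamma n (r + 1) s),
     Set.disjoint_union_right.mpr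
      ⟨disj_cons (show RStep.U ≠ RStep.D by decide) (Gamma n (r + 2) s) (Gamma n r s),
       Set.disjoint_union_right.mpr
        ⟨disj_cons (show RStep.U ≠ RStep.V by decide) (Gamma n (r + 2) s) (Gamma (n + 1) r s),
         disj_cons (show RStep.U ≠ RStep.B by decide) (Gamma n (r + 2) s)
           (Gamma (n + 2) r s)⟩⟩⟩
  have key := (HasSum.add_disjoint d1 hU (HasSum.add_disjoint d2 hH
    (HasSum.add_disjoint d3 hD (HasSum.add_disjoint d4 hV hB)))).tsum_eq
  unfold Tsum
  rw [gamma_first_succ n r s]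
  refine Eq.trans key ?_
  rw [stepWt_U, stepWt_H, stepWt_D, stepWt_V, stepWt_B]
  unfold Tsum
  ring

lemma T_first_zero (n s : ℕ) :
    Tsum a b lam c (n + 1) 0 s = Tsum a b lam c n 1 s + b 0 * Tsum a b lam c n 0 s := by
  have hU := hasSum_cons_piece hsum RStep.U (r := 0) (r' := 1)
    (by show ((0 : ℕ) : ℤ) + 1 = ((1 : ℕ) : ℤ); norm_num) n s
  have hH := hasSum_cons_piece hsum RStep.H (r := 0) (r' := 0)
    (by show ((0 : ℕ) : ℤ) + 0 = ((0 : ℕ) : ℤ); norm_num) n s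
  have d1 : Disjoint ((RStep.U :: ·) '' Gamma n 1 s) ((RStep.H :: ·) '' Gamma n 0 s) :=
    disj_cons (by decide) _ _
  have key := (HasSum.add_disjoint d1 hU hH).tsum_eq
  unfold Tsum
  rw [gamma_first_zero n s]
  refine Eq.trans key ?_
  rw [stepWt_U, stepWt_H]
  unfold Tsum
  ring

lemma T_last_succ (n r s : ℕ) :
    Tsum a b lam c (n + 1) r (s + 1) =
      Tsum a b lam c n r s + b (s + 1) * Tsum a b lam c n r (s + 1) +
        lam (s + 2) * Tsum a b lam c n r (s + 2) +
        a (s + 2) * Tsum a b lam c (n + 1) r (s + 2) +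
        c (s + 2) * Tsum a b lam c (n + 2) r (s + 2) := by
  have hU := hasSum_app_piece hsum RStep.U n r s
  have hH := hasSum_app_piece hsum RStep.H n r (s + 1)
  have hD := hasSum_app_piece hsum RStep.D n r (s + 2)
  have hV := hasSum_app_piece hsum RStep.V (n + 1) r (s + 2)
  have hB := hasSum_app_piece hsum RStep.B (n + 2) r (s + 2)
  have d4 : Disjoint ((· ++ [RStep.V]) '' Gamma (n + 1) r (s + 2))
      ((· ++ [RStep.B]) '' Gamma (n + 2) r (s + 2)) := disj_app (by decide) _ _
  have d3 := Set.disjoint_union_right.mpr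
    ⟨disj_app (show RStep.D ≠ RStep.V by decide) (Gamma n r (s + 2)) (Gamma (n + 1) r (s + 2)),
     disj_app (show RStep.D ≠ RStep.B by decide) (Gamma n r (s + 2)) (Gamma (n + 2) r (s + 2))⟩
  have d2 := Set.disjoint_union_right.mpr
    ⟨disj_app (show RStep.H ≠ RStep.D by decide) (Gamma n r (s + 1)) (Gamma n r (s + 2)),
     Set.disjoint_union_right.mpr
      ⟨disj_app (show RStep.H ≠ RStep.V by decide) (Gamma n r (s + 1)) (Gamma (n + 1) r (s + 2)),
       disj_app (show RStep.H ≠ RStep.B by decide) (Gamma n r (s + 1))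
         (Gamma (n + 2) r (s + 2))⟩⟩
  have d1 := Set.disjoint_union_right.mpr
    ⟨disj_app (show RStep.U ≠ RStep.H by decide) (Gamma n r s) (Gamma n r (s + 1)),
     Set.disjoint_union_right.mpr
      ⟨disj_app (show RStep.U ≠ RStep.D by decide) (Gamma n r s) (Gamma n r (s + 2)),
       Set.disjoint_union_right.mpr
        ⟨disj_app (show RStep.U ≠ RStep.V by decide) (Gamma n r s) (Gamma (n + 1) r (s + 2)),
         disj_app (show RStep.U ≠ RStep.B by decide) (Gamma n r s)
           (Gamma (n + 2) r (s + 2))⟩⟩⟩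
  have key := (HasSum.add_disjoint d1 hU (HasSum.add_disjoint d2 hH
    (HasSum.add_disjoint d3 hD (HasSum.add_disjoint d4 hV hB)))).tsum_eq
  unfold Tsum
  rw [gamma_last_succ n r s]
  refine Eq.trans key ?_
  rw [stepWt_U, stepWt_H, stepWt_D, stepWt_V, stepWt_B]
  unfold Tsum
  ring

lemma T_last_zero (n r : ℕ) :
    Tsum a b lam c (n + 1) r 0 =
      b 0 * Tsum a b lam c n r 0 + lam 1 * Tsum a b lam c n r 1 +
        a 1 * Tsum a b lam c (n + 1) r 1 + c 1 * Tsum a b lam c (n + 2) r 1 := by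
  have hH := hasSum_app_piece hsum RStep.H n r 0
  have hD := hasSum_app_piece hsum RStep.D n r 1
  have hV := hasSum_app_piece hsum RStep.V (n + 1) r 1
  have hB := hasSum_app_piece hsum RStep.B (n + 2) r 1
  have d3 : Disjoint ((· ++ [RStep.V]) '' Gamma (n + 1) r 1)
      ((· ++ [RStep.B]) '' Gamma (n + 2) r 1) := disj_app (by decide) _ _
  have d2 := Set.disjoint_union_right.mpr
    ⟨disj_app (show RStep.D ≠ RStep.V by decide) (Gamma n r 1) (Gamma (n + 1) r 1),
     disj_app (show RStep.D ≠ RStep.B by decide) (Gamma n r 1) (Gamma (n + 2) r 1)⟩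
  have d1 := Set.disjoint_union_right.mpr
    ⟨disj_app (show RStep.H ≠ RStep.D by decide) (Gamma n r 0) (Gamma n r 1),
     Set.disjoint_union_right.mpr
      ⟨disj_app (show RStep.H ≠ RStep.V by decide) (Gamma n r 0) (Gamma (n + 1) r 1),
       disj_app (show RStep.H ≠ RStep.B by decide) (Gamma n r 0) (Gamma (n + 2) r 1)⟩⟩
  have key := (HasSum.add_disjoint d1 hH
    (HasSum.add_disjoint d2 hD (HasSum.add_disjoint d3 hV hB))).tsum_eq
  unfold Tsum
  rw [gamma_last_zero n r]
  refine Eq.trans key ?_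
  rw [stepWt_H, stepWt_D, stepWt_V, stepWt_B]
  unfold Tsum
  ring

end TRec

section Alg

variable {a b lam c : ℕ → ℂ}

lemma dpoly_succ (m : ℕ) : dpoly a lam c (m + 1) =
    dpoly a lam c m * (C (c (m + 1)) * X ^ 2 + C (a (m + 1)) * X + C (lam (m + 1))) :=
  Finset.prod_range_succ _ m

lemma dpoly_ne_zero
    (hnz : ∀ n : ℕ, 1 ≤ n →
      (C (c n) * X ^ 2 + C (a n) * X + C (lam n) : Polynomial ℂ) ≠ 0) (m : ℕ) :
    dpoly a lam c m ≠ 0 := by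
  unfold dpoly
  exact Finset.prod_ne_zero_iff.mpr fun i _ => hnz (i + 1) (by omega)

lemma smul_ratfunc (z : ℂ) (f : RatFunc ℂ) :
    z • f = algebraMap (Polynomial ℂ) (RatFunc ℂ) (C z) * f := by
  rw [Algebra.smul_def, IsScalarTower.algebraMap_apply ℂ (Polynomial ℂ) (RatFunc ℂ),
    Polynomial.algebraMap_eq]

lemma star_rat_succ
    (hnz : ∀ n : ℕ, 1 ≤ n →
      (C (c n) * X ^ 2 + C (a n) * X + C (lam n) : Polynomial ℂ) ≠ 0) (b : ℕ → ℂ)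
    (k l : ℕ) :
    c (k + 2) • (RatFunc.X ^ (l + 2) * Qfun a b lam c (k + 2)) +
        a (k + 2) • (RatFunc.X ^ (l + 1) * Qfun a b lam c (k + 2)) +
        lam (k + 2) • (RatFunc.X ^ l * Qfun a b lam c (k + 2)) =
      RatFunc.X ^ (l + 1) * Qfun a b lam c (k + 1) -
        b (k + 1) • (RatFunc.X ^ l * Qfun a b lam c (k + 1)) -
        RatFunc.X ^ l * Qfun a b lam c k := by
  have hd0 := RatFunc.algebraMap_ne_zero (dpoly_ne_zero hnz k)
  have hr1 := RatFunc.algebraMap_ne_zero (hnz (k + 1) (by omega))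
  have hr2 := RatFunc.algebraMap_ne_zero (hnz (k + 2) (by omega))
  unfold Qfun
  rw [show Ppoly a b lam c (k + 2) =
      (X - C (b (k + 1))) * Ppoly a b lam c (k + 1) -
        (C (c (k + 1)) * X ^ 2 + C (a (k + 1)) * X + C (lam (k + 1))) * Ppoly a b lam c k
      from rfl,
    dpoly_succ (k + 1), dpoly_succ k, smul_ratfunc, smul_ratfunc, smul_ratfunc, smul_ratfunc,
    ← RatFunc.algebraMap_X]
  simp only [map_mul, map_sub, map_add, map_pow, RatFunc.algebraMap_C,
    RatFunc.algebraMap_X] at hd0 hr1 hr2 ⊢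
  have hr1' : RatFunc.X * (RatFunc.X * RatFunc.C (c (k + 1)) + RatFunc.C (a (k + 1))) +
      RatFunc.C (lam (k + 1)) ≠ 0 := by
    convert hr1 using 1; ring
  have hr2' : RatFunc.X * (RatFunc.C (c (k + 2)) * RatFunc.X + RatFunc.C (a (k + 1 + 1))) +
      RatFunc.C (lam (k + 1 + 1)) ≠ 0 := by
    convert hr2 using 1; ring
  field_simp [hd0, hr1, hr2]
  ring

lemma star_rat_zero
    (hnz : ∀ n : ℕ, 1 ≤ n →
      (C (c n) * X ^ 2 + C (a n) * X + C (lam n) : Polynomial ℂ) ≠ 0) (b : ℕ → ℂ)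
    (l : ℕ) :
    c 1 • (RatFunc.X ^ (l + 2) * Qfun a b lam c 1) +
        a 1 • (RatFunc.X ^ (l + 1) * Qfun a b lam c 1) +
        lam 1 • (RatFunc.X ^ l * Qfun a b lam c 1) =
      RatFunc.X ^ (l + 1) * Qfun a b lam c 0 -
        b 0 • (RatFunc.X ^ l * Qfun a b lam c 0) := by
  have hr1 := RatFunc.algebraMap_ne_zero (hnz 1 (by omega))
  unfold Qfun
  rw [show Ppoly a b lam c 1 = X - C (b 0) from rfl,
    show Ppoly a b lam c 0 = 1 from rfl,
    show dpoly a lam c 1 = 1 * (C (c 1) * X ^ 2 + C (a 1) * X + C (lam 1)) from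
      Finset.prod_range_succ _ 0,
    show dpoly a lam c 0 = 1 from rfl,
    smul_ratfunc, smul_ratfunc, smul_ratfunc, smul_ratfunc, ← RatFunc.algebraMap_X]
  simp only [map_mul, map_sub, map_add, map_pow, map_one, one_mul, RatFunc.algebraMap_C,
    RatFunc.algebraMap_X] at hr1 ⊢
  have hr1' : RatFunc.X * (RatFunc.C (c 1) * RatFunc.X + RatFunc.C (a 1)) + RatFunc.C (lam 1) ≠ 0 := by
    convert hr1 using 1; ring
  field_simp [hr1]
  ring

end Alg

section Steps

/-- `x^n Q_m` as an element of `RatFunc ℂ`. -/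
noncomputable def gfun (a b lam c : ℕ → ℂ) (p : ℕ × ℕ) : RatFunc ℂ :=
  RatFunc.X ^ p.1 * Qfun a b lam c p.2

variable {a b lam c : ℕ → ℂ}

lemma single_step
    (hnz : ∀ n : ℕ, 1 ≤ n →
      (C (c n) * X ^ 2 + C (a n) * X + C (lam n) : Polynomial ℂ) ≠ 0)
    (hsum : ∀ n r s : ℕ, Summable fun p : Gamma n r s => pathWt a b lam c (r : ℤ) p.1)
    (F : RatFunc ℂ →ₗ[ℂ] ℂ) (S' : Set (ℕ × ℕ)) (p : ℕ × ℕ)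
    (hS' : ∀ q ∈ S', F (gfun a b lam c q) = Tsum a b lam c q.1 0 q.2)
    (hsa : SingleApp a b lam c S' p) :
    F (gfun a b lam c p) = Tsum a b lam c p.1 0 p.2 := by
  obtain ⟨k, l, ⟨t₀, ht₀, ht1, ht2⟩, hoth⟩ := hsa
  let u : ℕ × ℕ → ℂ := fun q => F (gfun a b lam c q) - Tsum a b lam c q.1 0 q.2
  have hu' : ∀ n m : ℕ, u (n, m) =
      F (RatFunc.X ^ n * Qfun a b lam c m) - Tsum a b lam c n 0 m := fun n m => rfl
  have hall : ∀ (z : ℂ) (q : ℕ × ℕ), (z, q) ∈ relTerms a b lam c k l → q ≠ p →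
      z * u q = 0 := by
    intro z q htm htp
    rcases hoth (z, q) htm htp with h | h
    · rw [show z = (0 : ℂ) from h, zero_mul]
    · have h2 := hS' _ h
      have h3 : u q = 0 := by
        show F (gfun a b lam c q) - Tsum a b lam c q.1 0 q.2 = 0
        rw [h2, sub_self]
      rw [h3, mul_zero]
  suffices hup : u p = 0 by exact sub_eq_zero.mp hup
  have hid : c (k + 1) * u (l + 2, k + 1) + a (k + 1) * u (l + 1, k + 1) +
      lam (k + 1) * u (l, k + 1) - u (l + 1, k) + b k * u (l, k) +
      (if k = 0 then 0 else u (l, k - 1)) = 0 := by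
    rcases k with _ | k
    · show c 1 * u (l + 2, 1) + a 1 * u (l + 1, 1) + lam 1 * u (l, 1) -
        u (l + 1, 0) + b 0 * u (l, 0) + 0 = 0
      have hstar := congrArg F (star_rat_zero hnz b l)
      simp only [map_add, map_sub, map_smul, smul_eq_mul] at hstar
      have hmu := T_last_zero hsum l 0
      rw [hu', hu', hu', hu', hu']
      linear_combination hstar + hmu
    · show c (k + 2) * u (l + 2, k + 2) + a (k + 2) * u (l + 1, k + 2) +
        lam (k + 2) * u (l, k + 2) - u (l + 1, k + 1) + b (k + 1) * u (l, k + 1) +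
        u (l, k) = 0
      have hstar := congrArg F (star_rat_succ hnz b k l)
      simp only [map_add, map_sub, map_smul, smul_eq_mul] at hstar
      have hmu := T_last_succ hsum l 0 k
      rw [hu', hu', hu', hu', hu', hu']
      linear_combination hstar + hmu
  have m1 : ((c (k + 1)), ((l + 2 : ℕ), k + 1)) ∈ relTerms a b lam c k l := by
    simp [relTerms]
  have m2 : ((a (k + 1)), ((l + 1 : ℕ), k + 1)) ∈ relTerms a b lam c k l := by
    simp [relTerms]
  have m3 : ((lam (k + 1)), ((l : ℕ), k + 1)) ∈ relTerms a b lam c k l := by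
    simp [relTerms]
  have m4 : ((1 : ℂ), ((l + 1 : ℕ), k)) ∈ relTerms a b lam c k l := by
    simp [relTerms]
  have m5 : ((-b k), ((l : ℕ), k)) ∈ relTerms a b lam c k l := by
    simp [relTerms]
  have e6gen : ((l : ℕ), k - 1) ≠ p ∨ k = 0 →
      (if k = 0 then (0 : ℂ) else u (l, k - 1)) = 0 := by
    intro hne
    by_cases hk : k = 0
    · rw [if_pos hk]
    · rw [if_neg hk]
      have m6 : ((-1 : ℂ), ((l : ℕ), k - 1)) ∈ relTerms a b lam c k l := by
        simp [relTerms, hk]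
      have h' := hall (-1) _ m6 (hne.resolve_right hk)
      rw [neg_one_mul] at h'
      exact neg_eq_zero.mp h'
  have hcase : t₀ = (c (k + 1), ((l + 2 : ℕ), k + 1)) ∨
      t₀ = (a (k + 1), ((l + 1 : ℕ), k + 1)) ∨ t₀ = (lam (k + 1), ((l : ℕ), k + 1)) ∨
      t₀ = ((1 : ℂ), ((l + 1 : ℕ), k)) ∨ t₀ = (-b k, ((l : ℕ), k)) ∨
      (k ≠ 0 ∧ t₀ = ((-1 : ℂ), ((l : ℕ), k - 1))) := by
    by_cases hk : k = 0
    · subst hk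
      simp [relTerms] at ht₀
      tauto
    · simp [relTerms, hk] at ht₀
      tauto
  rcases hcase with rfl | rfl | rfl | rfl | rfl | ⟨hk, rfl⟩
  · have hp : p = ((l + 2 : ℕ), k + 1) := ht2.symm
    subst hp
    have e2 := hall _ _ m2 (by intro h; injection h with h1 h2; omega)
    have e3 := hall _ _ m3 (by intro h; injection h with h1 h2; omega)
    have e4 := hall _ _ m4 (by intro h; injection h with h1 h2; omega)
    have e5 := hall _ _ m5 (by intro h; injection h with h1 h2; omega)
    have e6 := e6gen (Or.inl (by intro h; injection h with h1 h2; omega))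
    have h0 : c (k + 1) * u ((l + 2 : ℕ), k + 1) = 0 := by
      linear_combination hid - e2 - e3 + e4 + e5 - e6
    exact (mul_eq_zero.mp h0).resolve_left ht1
  · have hp : p = ((l + 1 : ℕ), k + 1) := ht2.symm
    subst hp
    have e1 := hall _ _ m1 (by intro h; injection h with h1 h2; omega)
    have e3 := hall _ _ m3 (by intro h; injection h with h1 h2; omega)
    have e4 := hall _ _ m4 (by intro h; injection h with h1 h2; omega)
    have e5 := hall _ _ m5 (by intro h; injection h with h1 h2; omega)
    have e6 := e6gen (Or.inl (by intro h; injection h with h1 h2; omega))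
    have h0 : a (k + 1) * u ((l + 1 : ℕ), k + 1) = 0 := by
      linear_combination hid - e1 - e3 + e4 + e5 - e6
    exact (mul_eq_zero.mp h0).resolve_left ht1
  · have hp : p = ((l : ℕ), k + 1) := ht2.symm
    subst hp
    have e1 := hall _ _ m1 (by intro h; injection h with h1 h2; omega)
    have e2 := hall _ _ m2 (by intro h; injection h with h1 h2; omega)
    have e4 := hall _ _ m4 (by intro h; injection h with h1 h2; omega)
    have e5 := hall _ _ m5 (by intro h; injection h with h1 h2; omega)
    have e6 := e6gen (Or.inl (by intro h; injection h with h1 h2; omega))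
    have h0 : lam (k + 1) * u ((l : ℕ), k + 1) = 0 := by
      linear_combination hid - e1 - e2 + e4 + e5 - e6
    exact (mul_eq_zero.mp h0).resolve_left ht1
  · have hp : p = ((l + 1 : ℕ), k) := ht2.symm
    subst hp
    have e1 := hall _ _ m1 (by intro h; injection h with h1 h2; omega)
    have e2 := hall _ _ m2 (by intro h; injection h with h1 h2; omega)
    have e3 := hall _ _ m3 (by intro h; injection h with h1 h2; omega)
    have e5 := hall _ _ m5 (by intro h; injection h with h1 h2; omega)
    have e6 := e6gen (Or.inl (by intro h; injection h with h1 h2; omega))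
    have h0 : (1 : ℂ) * u ((l + 1 : ℕ), k) = 0 := by
      linear_combination -hid + e1 + e2 + e3 - e5 + e6
    exact (mul_eq_zero.mp h0).resolve_left ht1
  · have hp : p = ((l : ℕ), k) := ht2.symm
    subst hp
    have e1 := hall _ _ m1 (by intro h; injection h with h1 h2; omega)
    have e2 := hall _ _ m2 (by intro h; injection h with h1 h2; omega)
    have e3 := hall _ _ m3 (by intro h; injection h with h1 h2; omega)
    have e4 := hall _ _ m4 (by intro h; injection h with h1 h2; omega)
    have e6 := e6gen (by
      by_cases hk : k = 0
      · exact Or.inr hk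
      · exact Or.inl (by intro h; injection h with h1 h2; omega))
    have h0 : -b k * u ((l : ℕ), k) = 0 := by
      linear_combination -hid + e1 + e2 + e3 - e4 + e6
    exact (mul_eq_zero.mp h0).resolve_left ht1
  · have hp : p = ((l : ℕ), k - 1) := ht2.symm
    subst hp
    rw [if_neg hk] at hid
    have e1 := hall _ _ m1 (by intro h; injection h with h1 h2; omega)
    have e2 := hall _ _ m2 (by intro h; injection h with h1 h2; omega)
    have e3 := hall _ _ m3 (by intro h; injection h with h1 h2; omega)
    have e4 := hall _ _ m4 (by intro h; injection h with h1 h2; omega)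
    have e5 := hall _ _ m5 (by intro h; injection h with h1 h2; omega)
    have h0 : (-1 : ℂ) * u ((l : ℕ), k - 1) = 0 := by
      linear_combination -hid + e1 + e2 + e3 - e4 - e5
    exact (mul_eq_zero.mp h0).resolve_left ht1

lemma multi_step
    (hnz : ∀ n : ℕ, 1 ≤ n →
      (C (c n) * X ^ 2 + C (a n) * X + C (lam n) : Polynomial ℂ) ≠ 0)
    (hsum : ∀ n r s : ℕ, Summable fun p : Gamma n r s => pathWt a b lam c (r : ℤ) p.1)
    (F : RatFunc ℂ →ₗ[ℂ] ℂ) (S : Set (ℕ × ℕ)) (p : ℕ × ℕ)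
    (hS : ∀ q ∈ S, F (gfun a b lam c q) = Tsum a b lam c q.1 0 q.2)
    (hm : MultiApp a b lam c S p) :
    F (gfun a b lam c p) = Tsum a b lam c p.1 0 p.2 := by
  obtain ⟨L, hlast, hstep⟩ := hm
  have key : ∀ i : ℕ, i ≤ L.length → ∀ q ∈ L.take i,
      F (gfun a b lam c q) = Tsum a b lam c q.1 0 q.2 := by
    intro i
    induction i with
    | zero => simp
    | succ i ih =>
      intro hi q hq
      rw [List.take_succ] at hq
      rcases List.mem_append.mp hq with h | h
      · exact ih (by omega) q h
      · have hi' : i < L.length := by omega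
        have hq' : q = L.get ⟨i, hi'⟩ := by
          simpa [List.getElem?_eq_getElem hi'] using h
        subst hq'
        refine single_step hnz hsum F (S ∪ {q | q ∈ L.take i}) _ ?_ (hstep i hi')
        intro q' hq'
        rcases hq' with h' | h'
        · exact hS _ h'
        · exact ih (by omega) _ h'
  obtain ⟨ys, hys⟩ := List.getLast?_eq_some_iff.mp hlast
  have hmem : p ∈ L := by rw [hys]; simp
  have := key L.length le_rfl p (by simpa [List.take_length] using hmem)
  exact this

end Steps

section Final

variable {a b lam c : ℕ → ℂ}

lemma claim_r
    (hsum : ∀ n r s : ℕ, Summable fun p : Gamma n r s => pathWt a b lam c (r : ℤ) p.1)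
    (F : RatFunc ℂ →ₗ[ℂ] ℂ)
    (claim0 : ∀ n m : ℕ, F (RatFunc.X ^ n * Qfun a b lam c m) = Tsum a b lam c n 0 m) :
    ∀ r n s : ℕ,
      F (RatFunc.X ^ n * algebraMap (Polynomial ℂ) (RatFunc ℂ) (Ppoly a b lam c r) *
        Qfun a b lam c s) = Tsum a b lam c n r s := by
  intro r
  induction r using Nat.strong_induction_on with
  | _ r ih =>
    rcases r with _ | r
    · intro n s
      rw [show Ppoly a b lam c 0 = 1 from rfl, map_one, mul_one]
      exact claim0 n s
    rcases r with _ | r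
    · intro n s
      have harg : RatFunc.X ^ n * algebraMap (Polynomial ℂ) (RatFunc ℂ) (Ppoly a b lam c 1) *
          Qfun a b lam c s =
          RatFunc.X ^ (n + 1) * Qfun a b lam c s -
            b 0 • (RatFunc.X ^ n * Qfun a b lam c s) := by
        rw [show Ppoly a b lam c 1 = X - C (b 0) from rfl, map_sub, RatFunc.algebraMap_X,
          smul_ratfunc, pow_succ]
        ring
      rw [harg, map_sub, map_smul, smul_eq_mul, claim0, claim0]
      linear_combination T_first_zero hsum n s
    · intro n s
      have harg : RatFunc.X ^ n * algebraMap (Polynomial ℂ) (RatFunc ℂ)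
            (Ppoly a b lam c (r + 2)) * Qfun a b lam c s =
          (RatFunc.X ^ (n + 1) * algebraMap (Polynomial ℂ) (RatFunc ℂ)
              (Ppoly a b lam c (r + 1)) * Qfun a b lam c s
            - b (r + 1) • (RatFunc.X ^ n * algebraMap (Polynomial ℂ) (RatFunc ℂ)
              (Ppoly a b lam c (r + 1)) * Qfun a b lam c s))
          - (c (r + 1) • (RatFunc.X ^ (n + 2) * algebraMap (Polynomial ℂ) (RatFunc ℂ)
              (Ppoly a b lam c r) * Qfun a b lam c s)
            + a (r + 1) • (RatFunc.X ^ (n + 1) * algebraMap (Polynomial ℂ) (RatFunc ℂ)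
              (Ppoly a b lam c r) * Qfun a b lam c s)
            + lam (r + 1) • (RatFunc.X ^ n * algebraMap (Polynomial ℂ) (RatFunc ℂ)
              (Ppoly a b lam c r) * Qfun a b lam c s)) := by
        rw [show Ppoly a b lam c (r + 2) =
            (X - C (b (r + 1))) * Ppoly a b lam c (r + 1) -
              (C (c (r + 1)) * X ^ 2 + C (a (r + 1)) * X + C (lam (r + 1))) *
                Ppoly a b lam c r from rfl]
        simp only [map_sub, map_mul, map_add, map_pow, RatFunc.algebraMap_X, smul_ratfunc]
        ring
      rw [harg, map_sub, map_sub, map_add, map_add, map_smul, map_smul, map_smul, map_smul,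
        smul_eq_mul, smul_eq_mul, smul_eq_mul, smul_eq_mul,
        ih (r + 1) (by omega) (n + 1) s, ih (r + 1) (by omega) n s,
        ih r (by omega) (n + 2) s, ih r (by omega) (n + 1) s, ih r (by omega) n s]
      linear_combination T_first_succ hsum n r s

end Final

/-- Master theorem: suppose every `c_n x² + a_n x + λ_n` (`n ≥ 1`) is a nonzero
polynomial, the weight families over `Γ_{n,r,s}` are summable, and `W` admits a good
basis. Then there is a ℂ-linear map `ℒ : W → ℂ` with
`ℒ(x^n P_r Q_s) = Σ_{p∈Γ_{n,r,s}} wt(p)` for all `n, r, s ≥ 0`. -/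
theorem stmt5 (a b lam c : ℕ → ℂ)
    (hnz : ∀ n : ℕ, 1 ≤ n →
      (C (c n) * X ^ 2 + C (a n) * X + C (lam n) : Polynomial ℂ) ≠ 0)
    (hsum : ∀ n r s : ℕ, Summable fun p : Gamma n r s => pathWt a b lam c (r : ℤ) p.1)
    (hgood : ∃ S : Set (ℕ × ℕ), IsGoodBasis a b lam c S) :
    ∃ ℒ : Wspace a b lam c →ₗ[ℂ] ℂ,
      ∀ (n r s : ℕ) (f : Wspace a b lam c),
        (f : RatFunc ℂ) = RatFunc.X ^ n *
            algebraMap (Polynomial ℂ) (RatFunc ℂ) (Ppoly a b lam c r) * Qfun a b lam c s →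
        ℒ f = ∑' p : Gamma n r s, pathWt a b lam c (r : ℤ) p.1 := by

  classical
  obtain ⟨S, li, hspan, hmulti⟩ := hgood
  have li' : LinearIndependent ℂ (fun p : S => gfun a b lam c (p : ℕ × ℕ)) := li
  have hinj : Function.Injective (fun p : S => gfun a b lam c (p : ℕ × ℕ)) := li'.injective
  have lir := (linearIndepOn_id_range_iff hinj).mpr li'
  let Bas := Module.Basis.extend lir
  let w : RatFunc ℂ → ℂ := fun f =>
    if h : ∃ q : ℕ × ℕ, q ∈ S ∧ gfun a b lam c q = f then
      Tsum a b lam c h.choose.1 0 h.choose.2 else 0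
  let F : RatFunc ℂ →ₗ[ℂ] ℂ := Bas.constr ℂ (fun x => w x.val)
  have hFS : ∀ q ∈ S, F (gfun a b lam c q) = Tsum a b lam c q.1 0 q.2 := by
    intro q hq
    have hmem1 : gfun a b lam c q ∈ Set.range (fun p : S => gfun a b lam c (p : ℕ × ℕ)) :=
      ⟨⟨q, hq⟩, rfl⟩
    have hmem : gfun a b lam c q ∈ lir.extend (Set.subset_univ _) :=
      lir.subset_extend _ hmem1
    have h2 : Bas ⟨gfun a b lam c q, hmem⟩ = gfun a b lam c q :=
      Module.Basis.extend_apply_self lir _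
    have h1 : F (gfun a b lam c q) = w (gfun a b lam c q) := by
      conv_lhs => rw [← h2]
      exact Bas.constr_basis ℂ (fun x => w x.val) ⟨gfun a b lam c q, hmem⟩
    rw [h1]
    have hex : ∃ q' : ℕ × ℕ, q' ∈ S ∧ gfun a b lam c q' = gfun a b lam c q := ⟨q, hq, rfl⟩
    have h3 : w (gfun a b lam c q) = Tsum a b lam c hex.choose.1 0 hex.choose.2 := dif_pos hex
    rw [h3]
    obtain ⟨hc1, hc2⟩ := hex.choose_spec
    have h4 : hex.choose = q := by
      have h5 : (⟨hex.choose, hc1⟩ : S) = ⟨q, hq⟩ := hinj hc2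
      exact congrArg Subtype.val h5
    rw [h4]
  have claim0 : ∀ n m : ℕ, F (RatFunc.X ^ n * Qfun a b lam c m) = Tsum a b lam c n 0 m :=
    fun n m => multi_step hnz hsum F S (n, m) hFS (hmulti n m)
  have claimr := claim_r hsum F claim0
  refine ⟨F.comp (Wspace a b lam c).subtype, ?_⟩
  intro n r s f hf
  have h6 : (F.comp (Wspace a b lam c).subtype) f = F (f : RatFunc ℂ) := rfl
  rw [h6, hf]
  exact claimr r n s
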